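/- arXiv:2309.04111 — 10 statements merged into one kernel-verified Lean document; each statement's English description precedes it below -/
import Mathlib

section
/- Let G be a compact, Hausdorff, totally disconnected topological abelian group. Then for every neighborhood U of 0 in G there exists an integer n ≥ 1 such that n•G ⊆ U. -/
/-- Let `G` be a compact, Hausdorff, totally disconnected topological abelian group.
Then for every neighborhood `U` of `0` in `G` there exists an integer `n ≥ 1`
such that `n•G ⊆ U`. -/
theorem stmt_0 (G : Type*) [AddCommGroup G] [TopologicalSpace G] [IsTopologicalAddGroup G]
    [CompactSpace G] [T2Space G] [TotallyDisconnectedSpace G]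
    (U : Set G) (hU : U ∈ nhds (0 : G)) :
    ∃ n : ℕ, 1 ≤ n ∧ {g : G | ∃ x : G, n • x = g} ⊆ U := by
  obtain ⟨V, hVU, Vopen, hV0⟩ := mem_nhds_iff.mp hU
  obtain ⟨W, Wclopen, hW0, hWV⟩ := compact_exists_isClopen_in_isOpen Vopen hV0
  obtain ⟨H, hH⟩ := IsTopologicalAddGroup.exist_openAddSubgroup_sub_clopen_nhds_of_zero Wclopen hW0
  have : Finite (G ⧸ H.toAddSubgroup) := H.toAddSubgroup.quotient_finite_of_isOpen H.isOpen'
  have hfi : H.toAddSubgroup.FiniteIndex := AddSubgroup.finiteIndex_of_finite_quotient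
  refine ⟨H.toAddSubgroup.index, ?_, ?_⟩
  · exact Nat.one_le_iff_ne_zero.mpr hfi.index_ne_zero
  · rintro g ⟨x, rfl⟩
    exact hVU (hWV (hH (H.toAddSubgroup.nsmul_index_mem x)))
end

section
/- Let G be a compact Hausdorff topological abelian group, H a finitely generated subgroup, x an element of the topological closure of H in G, and n ≥ 1 an integer. Then there exists P ∈ H such that x − P ∈ n•G. -/
/-- Let `G` be a compact Hausdorff topological abelian group, `H` a finitely generated
subgroup, `x` in the closure of `H`, and `n ≥ 1`. Then some `P ∈ H` has `x - P ∈ n•G`. -/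
theorem stmt_3 (G : Type*) [AddCommGroup G] [TopologicalSpace G] [IsTopologicalAddGroup G]
    [CompactSpace G] [T2Space G]
    (H : AddSubgroup G) (hH : H.FG)
    (x : G) (hx : x ∈ closure (H : Set G)) (n : ℕ) (hn : 1 ≤ n) :
    ∃ P ∈ H, ∃ g : G, x - P = n • g := by
  classical
  set N : AddSubgroup G := AddSubgroup.map (zsmulAddGroupHom (n : ℤ)) ⊤ with hNdef
  have hNmem : ∀ y : G, y ∈ N ↔ ∃ g : G, (n : ℤ) • g = y := by
    intro y
    simp [hNdef, zsmulAddGroupHom]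
  -- N is closed
  haveI hNc : IsClosed (N : Set G) := by
    have heq : (N : Set G) = (fun g : G => (n : ℤ) • g) '' Set.univ := by
      ext y
      simp only [Set.mem_image, Set.mem_univ, true_and, SetLike.mem_coe]
      exact (hNmem y).trans Iff.rfl
    rw [heq]
    exact (isCompact_univ.image (continuous_zsmul _)).isClosed
  let π := QuotientAddGroup.mk' N
  -- the image of H in the quotient
  set H' : AddSubgroup (G ⧸ N) := H.map π with hH'def
  -- H' is finitely generated
  have hH'fg : H'.FG := by
    obtain ⟨S, hS⟩ := hH
    refine ⟨S.image π, ?_⟩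
    rw [Finset.coe_image, ← AddMonoidHom.map_closure, hS]
  -- every element of G ⧸ N is n-torsion
  have htor : ∀ y : G ⧸ N, n • y = 0 := by
    intro y
    obtain ⟨g, rfl⟩ := QuotientAddGroup.mk'_surjective N y
    rw [← map_nsmul]
    refine (QuotientAddGroup.eq_zero_iff _).2 ?_
    exact (hNmem _).2 ⟨g, by simp⟩
  -- H' is finite
  haveI : AddGroup.FG H' := (AddGroup.fg_iff_addSubgroup_fg H').2 hH'fg
  haveI : Finite H' := by
    refine AddCommGroup.finite_of_fg_torsion _ ?_
    intro y
    refine isOfFinAddOrder_iff_nsmul_eq_zero.2 ⟨n, hn, ?_⟩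
    ext
    simpa using htor (y : G ⧸ N)
  -- hence H' is a closed subset of the (T3) quotient
  have hH'closed : IsClosed (H' : Set (G ⧸ N)) :=
    (Set.toFinite (H' : Set (G ⧸ N))).isClosed
  -- push x into the quotient
  have hmaps : Set.MapsTo π (closure (H : Set G)) (H' : Set (G ⧸ N)) := by
    have h1 : Set.MapsTo π (H : Set G) (H' : Set (G ⧸ N)) := fun y hy => ⟨y, hy, rfl⟩
    exact h1.closure_left continuous_quotient_mk' hH'closed
  obtain ⟨P, hP, hPx⟩ := hmaps hx
  refine ⟨P, hP, ?_⟩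
  have : x - P ∈ N := by
    have : π P = π x := hPx
    have := (QuotientAddGroup.mk'_eq_mk' N).1 this
    obtain ⟨z, hz, hz'⟩ := this
    have : x = P + z := hz'.symm
    rw [this]
    simpa using hz
  obtain ⟨g, hg⟩ := (hNmem _).1 this
  exact ⟨g, by rw [← hg, natCast_zsmul]⟩
end

section
/- Let G be a compact Hausdorff topological abelian group, H a finitely generated subgroup, and x an element of the topological closure of H in G. Then there exists a sequence (P_n)_{n ≥ 1} of elements of H such that x − P_n ∈ n•G for all n ≥ 1, and P_{mn} − P_n ∈ n•H for all m, n ≥ 1. -/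
open Filter

section Aux

variable {G : Type*} [AddCommGroup G]

/-- Multiplication by `n` as an additive hom. -/
private def mulN (G : Type*) [AddCommGroup G] (n : ℕ) : G →+ G :=
  AddMonoidHom.mk' (fun g => n • g) (fun a b => smul_add n a b)

@[simp] private lemma mulN_apply (n : ℕ) (g : G) : mulN G n g = n • g := rfl

/-- `n•H` as a subgroup of `G`. -/
private def NH (n : ℕ) (H : AddSubgroup G) : AddSubgroup G := H.map (mulN G n)

private lemma mem_NH {n : ℕ} {H : AddSubgroup G} {y : G} :
    y ∈ NH n H ↔ ∃ h ∈ H, n • h = y := by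
  simp [NH, AddSubgroup.mem_map]

private lemma NH_anti {d m : ℕ} (hdm : d ∣ m) (H : AddSubgroup G) : NH m H ≤ NH d H := by
  intro y hy
  rcases mem_NH.mp hy with ⟨h, hh, rfl⟩
  rcases hdm with ⟨c, rfl⟩
  exact mem_NH.mpr ⟨c • h, H.nsmul_mem hh c, by rw [smul_smul]⟩

private lemma finite_quot (A : Type*) [AddCommGroup A] [AddGroup.FG A] {n : ℕ}
    (hn : 0 < n) : Finite (A ⧸ (mulN A n).range) := by
  have hsurj : Function.Surjective (QuotientAddGroup.mk' (mulN A n).range) :=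
    QuotientAddGroup.mk'_surjective _
  have : AddGroup.FG (A ⧸ (mulN A n).range) := AddGroup.fg_of_surjective hsurj
  refine AddCommGroup.finite_of_fg_torsion _ (fun q => ?_)
  obtain ⟨a, rfl⟩ := hsurj q
  refine isOfFinAddOrder_iff_nsmul_eq_zero.mpr ⟨n, hn, ?_⟩
  rw [← map_nsmul]
  exact (QuotientAddGroup.eq_zero_iff _).mpr ⟨a, rfl⟩

variable [TopologicalSpace G] [IsTopologicalAddGroup G] [CompactSpace G] [T2Space G]

private lemma isClosed_range_mulN (n : ℕ) : IsClosed ((mulN G n).range : Set G) := by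
  have : ((mulN G n).range : Set G) = (fun g : G => n • g) '' Set.univ := by
    ext y; simp [AddMonoidHom.mem_range, eq_comm]
  rw [this]
  exact (isCompact_univ.image (continuous_nsmul n)).isClosed

/-- For every `n ≥ 1` there is `P ∈ H` with `x - P ∈ n•G`. -/
private lemma exists_approx (H : AddSubgroup G) (hH : H.FG) {x : G}
    (hx : x ∈ closure (H : Set G)) {n : ℕ} (hn : 0 < n) :
    ∃ P ∈ H, ∃ g : G, x - P = n • g := by
  classical
  have hfg : AddGroup.FG H := (AddGroup.fg_iff_addSubgroup_fg H).mpr hH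
  set K : AddSubgroup H := (mulN H n).range with hK
  have hfin : Finite (H ⧸ K) := finite_quot H hn
  set N : AddSubgroup G := (mulN G n).range with hNdef
  set T : Set G := ⋃ q : H ⧸ K, (fun y => ((Quotient.out q : H) : G) + y) '' (N : Set G)
    with hT
  have hTclosed : IsClosed T := by
    refine isClosed_iUnion_of_finite (fun q => ?_)
    exact (isClosedMap_add_left (((Quotient.out q : H) : G))) _ (isClosed_range_mulN n)
  have hHT : (H : Set G) ⊆ T := by
    intro h hh
    set q : H ⧸ K := QuotientAddGroup.mk ⟨h, hh⟩ with hq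
    have hout : (QuotientAddGroup.mk (Quotient.out q) : H ⧸ K) = QuotientAddGroup.mk ⟨h, hh⟩ := by
      rw [← hq]; exact Quotient.out_eq q
    have hmem : Quotient.out q - (⟨h, hh⟩ : H) ∈ K :=
      (QuotientAddGroup.eq_iff_sub_mem).mp hout
    rcases hmem with ⟨a, ha⟩
    refine Set.mem_iUnion.mpr ⟨q, ⟨n • ((-a : H) : G), ⟨(-a : H), rfl⟩, ?_⟩⟩
    have ha' : (n : ℕ) • (a : G) = ((Quotient.out q : H) : G) - h := by
      have := congrArg (fun z : H => (z : G)) ha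
      simpa using this
    have hkey : (n : ℕ) • ((-a : H) : G) = h - ((Quotient.out q : H) : G) := by
      push_cast
      rw [smul_neg, ha']; abel
    show ((Quotient.out q : H) : G) + (n : ℕ) • ((-a : H) : G) = h
    rw [hkey]; abel
  have hxT : x ∈ T := closure_minimal hHT hTclosed hx
  rcases Set.mem_iUnion.mp hxT with ⟨q, y, ⟨g, hg⟩, hxy⟩
  refine ⟨((Quotient.out q : H) : G), (Quotient.out q : H).2, g, ?_⟩
  simp only [mulN_apply] at hg
  have hxy' : ((Quotient.out q : H) : G) + y = x := hxy
  rw [← hxy', ← hg]; abel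

end Aux

/-- Compatible system: there is a sequence `(P n)` in `H` with `x - P n ∈ n•G` for all
`n ≥ 1` and `P (m*n) - P n ∈ n•H` for all `m, n ≥ 1`. -/
theorem stmt_4 (G : Type*) [AddCommGroup G] [TopologicalSpace G] [IsTopologicalAddGroup G]
    [CompactSpace G] [T2Space G]
    (H : AddSubgroup G) (hH : H.FG)
    (x : G) (hx : x ∈ closure (H : Set G)) :
    ∃ P : ℕ → G, (∀ n : ℕ, 1 ≤ n → P n ∈ H) ∧
      (∀ n : ℕ, 1 ≤ n → ∃ g : G, x - P n = n • g) ∧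
      (∀ m n : ℕ, 1 ≤ m → 1 ≤ n → ∃ h ∈ H, P (m * n) - P n = n • h) := by
  classical
  have hfg : AddGroup.FG H := (AddGroup.fg_iff_addSubgroup_fg H).mpr hH
  -- choose approximations at factorial levels
  have happrox : ∀ j : ℕ, ∃ p : H, ∃ g : G, x - (p : G) = (j.factorial) • g := by
    intro j
    obtain ⟨P, hP, g, hg⟩ := exists_approx H hH hx (Nat.factorial_pos j)
    exact ⟨⟨P, hP⟩, g, hg⟩
  choose p gp hgp using happrox
  -- a nonprincipal-enough ultrafilter
  obtain ⟨U, hU⟩ := (atTop : Filter ℕ).exists_ultrafilter_le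
  -- for each k, a U-large set on which p is constant mod (k!)•H
  have hlevel : ∀ k : ℕ, ∃ A : Set ℕ, A ∈ U ∧
      ∀ i ∈ A, ∀ j ∈ A, ((p i : G) - (p j : G)) ∈ NH (k.factorial) H := by
    intro k
    have hfin : Finite (H ⧸ (mulN H (k.factorial)).range) :=
      finite_quot H (Nat.factorial_pos k)
    set c : ℕ → H ⧸ (mulN H (k.factorial)).range :=
      fun j => QuotientAddGroup.mk (p j) with hc
    obtain ⟨q, hq⟩ := (U.map c).eq_pure_of_finite
    have hAU : c ⁻¹' {q} ∈ U := by
      have : {q} ∈ U.map c := by rw [hq]; exact rfl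
      exact this
    refine ⟨c ⁻¹' {q}, hAU, ?_⟩
    intro i hi j hj
    have : c i = c j := by
      simp only [Set.mem_preimage, Set.mem_singleton_iff] at hi hj
      rw [hi, hj]
    have hmem : p i - p j ∈ (mulN H (k.factorial)).range :=
      (QuotientAddGroup.eq_iff_sub_mem).mp this
    rcases hmem with ⟨a, ha⟩
    refine mem_NH.mpr ⟨(a : G), a.2, ?_⟩
    have := congrArg (fun z : H => (z : G)) ha
    simpa using this
  choose A hAU hAeq using hlevel
  -- choose indices
  have hBU : ∀ k : ℕ, (A k ∩ {j | k ≤ j}).Nonempty := by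
    intro k
    refine Ultrafilter.nonempty_of_mem (Filter.inter_mem (hAU k) ?_)
    exact hU (Filter.mem_atTop k)
  choose jdx hjdx using hBU
  set R : ℕ → G := fun k => (p (jdx k) : G) with hR
  have hjA : ∀ k, jdx k ∈ A k := fun k => (hjdx k).1
  have hjge : ∀ k, k ≤ jdx k := fun k => (hjdx k).2
  -- consecutive compatibility
  have hstep : ∀ k : ℕ, R (k + 1) - R k ∈ NH (k.factorial) H := by
    intro k
    obtain ⟨t, htk, htk1⟩ := Ultrafilter.nonempty_of_mem (Filter.inter_mem (hAU k) (hAU (k + 1)))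
    have h1 : (p (jdx (k + 1)) : G) - (p t : G) ∈ NH (k.factorial) H :=
      NH_anti (Nat.factorial_dvd_factorial (Nat.le_succ k)) H
        (hAeq (k + 1) _ (hjA (k + 1)) t htk1)
    have h2 : (p t : G) - (p (jdx k) : G) ∈ NH (k.factorial) H := hAeq k t htk _ (hjA k)
    have := (NH (k.factorial) H).add_mem h1 h2
    simpa [hR, sub_add_sub_cancel] using this
  -- telescoping: R (n + s) - R n ∈ n•H for n ≥ 1
  have htel : ∀ n : ℕ, 1 ≤ n → ∀ s : ℕ, R (n + s) - R n ∈ NH n H := by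
    intro n hn s
    induction s with
    | zero => simpa using (NH n H).zero_mem
    | succ s ih =>
        have h1 : R (n + s + 1) - R (n + s) ∈ NH n H :=
          NH_anti (Nat.dvd_factorial hn (Nat.le_add_right n s)) H (hstep (n + s))
        have := (NH n H).add_mem h1 ih
        simpa [← Nat.add_assoc, sub_add_sub_cancel] using this
  refine ⟨R, fun n _ => (p (jdx n)).2, ?_, ?_⟩
  · intro n hn
    obtain ⟨c, hc⟩ : (n : ℕ) ∣ (jdx n).factorial := Nat.dvd_factorial hn (hjge n)
    refine ⟨c • gp (jdx n), ?_⟩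
    rw [hR]
    rw [hgp (jdx n), hc, mul_smul]
  · intro m n hm hn
    have hmn : n ≤ m * n := Nat.le_mul_of_pos_left n hm
    have : R (m * n) - R n ∈ NH n H := by
      have := htel n hn (m * n - n)
      rwa [Nat.add_sub_cancel' hmn] at this
    rcases mem_NH.mp this with ⟨h, hh, hhe⟩
    exact ⟨h, hh, hhe.symm⟩
end

section
/- Let G be a compact Hausdorff topological abelian group and H a finitely generated subgroup, and let C denote the topological closure of H in G. Then for every integer n ≥ 1 the quotient group C/(n•C) is finite. -/
/-- Let `C` be the topological closure of a finitely generated subgroup `H` of a compact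
Hausdorff topological abelian group `G`. Then `C/(n•C)` is finite for every `n ≥ 1`. -/
theorem stmt_5 (G : Type*) [AddCommGroup G] [TopologicalSpace G] [IsTopologicalAddGroup G]
    [CompactSpace G] [T2Space G]
    (H : AddSubgroup G) (hH : H.FG) (n : ℕ) (hn : 1 ≤ n) :
    Finite ((↥H.topologicalClosure) ⧸
      (AddMonoidHom.mk' (fun x : H.topologicalClosure => n • x)
        (fun a b => smul_add n a b)).range) := by
  set C : AddSubgroup G := H.topologicalClosure with hC
  set N : AddSubgroup ↥C :=
    (AddMonoidHom.mk' (fun x : ↥C => n • x) (fun a b => smul_add n a b)).range with hN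
  -- C is compact
  haveI : CompactSpace ↥C :=
    isCompact_iff_compactSpace.mp ((AddSubgroup.isClosed_topologicalClosure H).isCompact)
  -- N is closed in C
  have hNclosed : IsClosed (N : Set ↥C) := by
    have : (N : Set ↥C) = Set.range (fun x : ↥C => n • x) := by
      ext x; simp [hN, AddMonoidHom.mem_range, Set.mem_range]
    rw [this]
    exact (isCompact_range (continuous_nsmul n)).isClosed
  -- every element of the quotient is killed by n
  have hkill : ∀ y : ↥C ⧸ N, n • y = 0 := by
    intro y
    induction y using QuotientAddGroup.induction_on with
    | H x =>
      rw [← QuotientAddGroup.mk_nsmul, QuotientAddGroup.eq_zero_iff]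
      exact ⟨x, rfl⟩
  have hHC : H ≤ C := H.le_topologicalClosure
  -- the image of H in the quotient
  set f : ↥H →+ (↥C ⧸ N) :=
    (QuotientAddGroup.mk' N).comp (AddSubgroup.inclusion hHC) with hf
  set D : AddSubgroup (↥C ⧸ N) := f.range with hD
  haveI : AddGroup.FG ↥H := (AddGroup.fg_iff_addSubgroup_fg H).mpr hH
  haveI : AddGroup.FG ↥D := AddGroup.fg_of_surjective f.rangeRestrict_surjective
  haveI hDfin : Finite ↥D := by
    apply AddCommGroup.finite_of_fg_torsion
    intro x
    rw [isOfFinAddOrder_iff_nsmul_eq_zero]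
    exact ⟨n, hn, Subtype.ext (by rw [AddSubgroup.coe_nsmul, hkill]; rfl)⟩
  -- the preimage S of D in C is closed
  set S : Set ↥C := QuotientAddGroup.mk' N ⁻¹' (D : Set (↥C ⧸ N)) with hS
  have hSclosed : IsClosed S := by
    have : S = ⋃ d : ↥D, (fun y : ↥C => y - (QuotientAddGroup.mk'_surjective N d).choose) ⁻¹'
        (N : Set ↥C) := by
      ext y
      simp only [Set.mem_iUnion, Set.mem_preimage, SetLike.mem_coe, hS]
      constructor
      · intro hy
        refine ⟨⟨_, hy⟩, ?_⟩
        have hrep := (QuotientAddGroup.mk'_surjective N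
          (⟨QuotientAddGroup.mk' N y, hy⟩ : ↥D)).choose_spec
        rw [← QuotientAddGroup.eq_iff_sub_mem, ← QuotientAddGroup.mk'_apply]
        exact hrep.symm
      · rintro ⟨d, hd⟩
        have hrep := (QuotientAddGroup.mk'_surjective N d).choose_spec
        have : QuotientAddGroup.mk' N y = (d : ↥C ⧸ N) := by
          rw [← hrep, QuotientAddGroup.mk'_apply, QuotientAddGroup.mk'_apply,
            QuotientAddGroup.eq_iff_sub_mem]
          exact hd
        rw [this]; exact d.2
    rw [this]
    exact isClosed_iUnion_of_finite fun d =>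
      hNclosed.preimage (continuous_id.sub continuous_const)
  -- S contains the image of H, which is dense in C
  have hsub : {x : ↥C | (x : G) ∈ H} ⊆ S := by
    intro x hx
    exact ⟨⟨x, hx⟩, rfl⟩
  have hdense : ∀ c : ↥C, c ∈ closure {x : ↥C | (x : G) ∈ H} := by
    intro c
    rw [show {x : ↥C | (x : G) ∈ H} = ((↑) : ↥C → G) ⁻¹' (H : Set G) from rfl]
    have hc : (c : G) ∈ closure (H : Set G) := c.2
    rw [mem_closure_iff_nhds] at hc ⊢
    intro t ht
    rw [nhds_subtype_eq_comap, Filter.mem_comap] at ht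
    obtain ⟨u, hu, hut⟩ := ht
    obtain ⟨g, hgu, hgH⟩ := hc u hu
    have hgC : g ∈ C := hHC hgH
    exact ⟨⟨g, hgC⟩, hut hgu, hgH⟩
  have hStotal : ∀ c : ↥C, c ∈ S := fun c =>
    hSclosed.closure_subset_iff.mpr hsub (hdense c)
  -- hence D is everything, so the quotient is finite
  have hDtop : (D : Set (↥C ⧸ N)) = Set.univ := by
    rw [Set.eq_univ_iff_forall]
    intro y
    induction y using QuotientAddGroup.induction_on with
    | H c => exact hStotal c
  rw [← Set.finite_univ_iff, ← hDtop]
  exact D.carrier.toFinite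
end

section
/- Let G be a compact Hausdorff topological abelian group, H a finitely generated subgroup, and C the topological closure of H in G. Then for every x ∈ C and every integer n ≥ 1 there exist P ∈ H and y ∈ C such that x = n•y + P. -/
/-- Every `x` in the closure `C` of a finitely generated subgroup `H` of a compact
Hausdorff topological abelian group can be written `x = n•y + P` with `P ∈ H`, `y ∈ C`. -/
theorem stmt_6 (G : Type*) [AddCommGroup G] [TopologicalSpace G] [IsTopologicalAddGroup G]
    [CompactSpace G] [T2Space G]
    (H : AddSubgroup G) (hH : H.FG)
    (x : G) (hx : x ∈ closure (H : Set G)) (n : ℕ) (hn : 1 ≤ n) :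
    ∃ P ∈ H, ∃ y ∈ closure (H : Set G), x = n • y + P := by
  obtain ⟨s, hs⟩ := hH
  set C : Set G := closure (H : Set G) with hC
  -- the finite set of coset representatives
  set S : Set G := (fun f : s → Fin n => ∑ g ∈ s.attach, ((f g : ℤ) • (g : G))) '' Set.univ
    with hS
  have hSfin : S.Finite := Set.Finite.image _ Set.finite_univ
  have hSH : ∀ P ∈ S, P ∈ H := by
    rintro P ⟨f, -, rfl⟩
    exact AddSubgroup.sum_mem H fun g _ => AddSubgroup.zsmul_mem H
      (hs ▸ AddSubgroup.subset_closure g.2) _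
  -- the closed set covering H
  set F : Set G := ⋃ P ∈ S, (fun y => n • y + P) '' C with hF
  have hFclosed : IsClosed F := by
    apply Set.Finite.isClosed_biUnion hSfin
    intro P _
    have hcont : Continuous fun y : G => n • y + P := by fun_prop
    exact ((isClosed_closure.isCompact).image hcont).isClosed
  have hHF : (H : Set G) ⊆ F := by
    intro h hh
    have hh' : h ∈ Submodule.span ℤ (s : Set G) := by
      have := Submodule.span_int_eq_addSubgroupClosure (s : Set G)
      rw [hs] at this
      rw [← this] at hh
      exact hh
    obtain ⟨c, -, hc⟩ := Submodule.mem_span_finset.1 hh'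
    have hnpos : (0 : ℤ) < (n : ℤ) := by exact_mod_cast hn
    -- remainders
    set f : s → Fin n := fun g => ⟨(c g % n).toNat, by
      have h1 : 0 ≤ c (g : G) % (n : ℤ) := Int.emod_nonneg _ hnpos.ne'
      have h2 : c (g : G) % (n : ℤ) < n := Int.emod_lt_of_pos _ hnpos
      omega⟩ with hf
    have hfval : ∀ g : s, ((f g : ℕ) : ℤ) = c g % n := by
      intro g
      simp only [hf]
      have h1 : 0 ≤ c (g : G) % (n : ℤ) := Int.emod_nonneg _ hnpos.ne'
      omega
    set y₀ : G := ∑ g ∈ s, ((c g / n) • g) with hy₀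
    have hy₀H : y₀ ∈ H := AddSubgroup.sum_mem H fun g hg => AddSubgroup.zsmul_mem H
      (hs ▸ AddSubgroup.subset_closure hg) _
    set P : G := ∑ g ∈ s.attach, ((f g : ℤ) • (g : G)) with hP
    have hPS : P ∈ S := ⟨f, Set.mem_univ _, rfl⟩
    have key : h = n • y₀ + P := by
      have : ∀ g ∈ s, c g • g = n • ((c g / n) • g) + (c g % n) • g := by
        intro g hg
        rw [natCast_zsmul (((c g / n) • g)) n |>.symm, ← mul_smul, ← add_smul,
          Int.mul_ediv_add_emod]
      calc h = ∑ g ∈ s, c g • g := hc.symm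
        _ = ∑ g ∈ s, (n • ((c g / n) • g) + (c g % n) • g) := Finset.sum_congr rfl this
        _ = n • y₀ + ∑ g ∈ s, (c g % n) • g := by
            rw [Finset.sum_add_distrib, hy₀, Finset.smul_sum]
        _ = n • y₀ + P := by
            congr 1
            rw [hP, ← Finset.sum_attach s (fun g => (c g % n) • g)]
            exact Finset.sum_congr rfl fun g _ => by rw [hfval g]
    exact Set.mem_biUnion hPS ⟨y₀, subset_closure hy₀H, key.symm⟩
  have hCF : C ⊆ F := closure_minimal hHF hFclosed
  obtain ⟨P, hP, y, hy, hxy⟩ := Set.mem_iUnion₂.1 (hCF hx)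
  exact ⟨P, hSH P hP, y, hy, hxy.symm⟩
end

section
/- Let G be a compact Hausdorff topological abelian group such that every neighborhood of 0 in G contains n•G for some integer n ≥ 1, and let H be a finitely generated subgroup. Then the topological closure of H in G equals the intersection over all integers n ≥ 1 of the sets H + n•G = {P + n·g : P ∈ H, g ∈ G}. -/
/-- If every neighborhood of `0` in the compact Hausdorff abelian group `G` contains
`n•G` for some `n ≥ 1`, and `H` is a finitely generated subgroup, then the closure of
`H` equals `⋂_{n ≥ 1} (H + n•G)`. -/
theorem stmt_7 (G : Type*) [AddCommGroup G] [TopologicalSpace G] [IsTopologicalAddGroup G]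
    [CompactSpace G] [T2Space G]
    (hG : ∀ U ∈ nhds (0 : G), ∃ n : ℕ, 1 ≤ n ∧ {g : G | ∃ x : G, n • x = g} ⊆ U)
    (H : AddSubgroup G) (hH : H.FG) :
    closure (H : Set G) =
      ⋂ n ∈ {n : ℕ | 1 ≤ n}, {g : G | ∃ P ∈ H, ∃ x : G, g = P + n • x} := by
  obtain ⟨T, hT⟩ := hH
  apply subset_antisymm
  · -- closure H ⊆ each H + nG
    refine Set.subset_iInter₂ fun n hn => ?_
    have hn1 : (1 : ℕ) ≤ n := hn
    -- C = finite union of cosets c(f) + nG with c(f) ∈ H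
    set C : Set G :=
      ⋃ f : {x // x ∈ T} → Fin n,
        (fun x : G => (∑ t ∈ T.attach, ((f t : ℤ) • (t : G))) + n • x) '' Set.univ with hC
    have hTH : (T : Set G) ⊆ (H : Set G) := by
      rw [← hT]; exact AddSubgroup.subset_closure
    have hclosed : IsClosed C := by
      refine isClosed_iUnion_of_finite fun f => ?_
      have : IsCompact ((fun x : G =>
          (∑ t ∈ T.attach, ((f t : ℤ) • (t : G))) + n • x) '' Set.univ) :=
        isCompact_univ.image (by fun_prop)
      exact this.isClosed
    have hsub : (H : Set G) ⊆ C := by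
      intro h hh
      have : h ∈ Submodule.span ℤ (T : Set G) := by
        rw [← hT] at hh
        rw [← Submodule.span_int_eq_addSubgroupClosure] at hh
        exact hh
      obtain ⟨c, -, hc⟩ := Submodule.mem_span_finset.1 this
      have hnpos : (0 : ℤ) < (n : ℤ) := by exact_mod_cast hn1
      refine Set.mem_iUnion.2 ⟨fun t => ⟨(c (t : G) % n).toNat, ?_⟩, ?_⟩
      · have := Int.emod_lt_of_pos (c (t : G)) hnpos
        omega
      · refine ⟨∑ t ∈ T.attach, (c (t : G) / n) • (t : G), Set.mem_univ _, ?_⟩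
        have key : ∀ t ∈ T.attach,
            ((((c (t : G) % n).toNat : ℤ)) • (t : G)) + (n : ℕ) • ((c (t : G) / n) • (t : G))
              = c (t : G) • (t : G) := by
          intro t _
          have h0 : 0 ≤ c (t : G) % n := Int.emod_nonneg _ (by omega)
          have : (((c (t : G) % n).toNat : ℤ)) = c (t : G) % n := Int.toNat_of_nonneg h0
          rw [this, ← natCast_zsmul, smul_smul, ← add_smul, Int.emod_add_mul_ediv]
        calc (∑ t ∈ T.attach, (((c (t:G) % n).toNat : ℤ)) • (t : G))
              + n • ∑ t ∈ T.attach, (c (t : G) / n) • (t : G)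
            = ∑ t ∈ T.attach, ((((c (t:G) % n).toNat : ℤ)) • (t : G)
                + n • ((c (t : G) / n) • (t : G))) := by
              rw [Finset.smul_sum, Finset.sum_add_distrib]
          _ = ∑ t ∈ T.attach, c (t : G) • (t : G) := Finset.sum_congr rfl key
          _ = ∑ t ∈ T, c t • t := Finset.sum_attach T fun t => c t • t
          _ = h := hc
    have hCsub : C ⊆ {g : G | ∃ P ∈ H, ∃ x : G, g = P + n • x} := by
      rintro g hg
      obtain ⟨f, x, -, rfl⟩ := Set.mem_iUnion.1 hg
      exact ⟨_, AddSubgroup.sum_mem _ (fun t _ => AddSubgroup.zsmul_mem _ (hTH t.2) _), x, rfl⟩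
    exact (closure_minimal hsub hclosed).trans hCsub
  · intro g hg
    rw [mem_closure_iff_nhds]
    intro U hU
    have hW : (fun x : G => g + x) ⁻¹' U ∈ nhds (0 : G) := by
      have : Continuous fun x : G => g + x := by fun_prop
      apply this.continuousAt.preimage_mem_nhds
      simpa using hU
    obtain ⟨n, hn1, hnsub⟩ := hG _ hW
    have := Set.mem_iInter₂.1 hg n hn1
    obtain ⟨P, hP, x, hx⟩ := this
    refine ⟨P, ?_, hP⟩
    have : (-(n • x)) ∈ (fun x : G => g + x) ⁻¹' U := hnsub ⟨-x, by simp⟩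
    simpa [hx, add_assoc] using this
end

section
/- Let G be a compact Hausdorff topological abelian group such that every neighborhood of 0 in G contains n•G for some integer n ≥ 1, let H be a finitely generated subgroup, and let C be the topological closure of H in G. Then for every x ∈ C and every open set U containing x there exist an integer n₀ ≥ 1, an element P ∈ H, and an element y ∈ C such that x = n₀•y + P and P + n₀•G ⊆ U. -/
/-- For every `x` in the closure `C` of `H` and every open `U ∋ x` there are `n₀ ≥ 1`,
`P ∈ H` and `y ∈ C` with `x = n₀•y + P` and `P + n₀•G ⊆ U`. -/
theorem stmt_8 (G : Type*) [AddCommGroup G] [TopologicalSpace G] [IsTopologicalAddGroup G]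
    [CompactSpace G] [T2Space G]
    (hG : ∀ U ∈ nhds (0 : G), ∃ n : ℕ, 1 ≤ n ∧ {g : G | ∃ x : G, n • x = g} ⊆ U)
    (H : AddSubgroup G) (hH : H.FG)
    (x : G) (hx : x ∈ closure (H : Set G))
    (U : Set G) (hUopen : IsOpen U) (hxU : x ∈ U) :
    ∃ n₀ : ℕ, 1 ≤ n₀ ∧ ∃ P ∈ H, ∃ y ∈ closure (H : Set G),
      x = n₀ • y + P ∧ {g : G | ∃ z : G, g = P + n₀ • z} ⊆ U := by
  classical
  -- Step 1: find a neighborhood `W` of 0 with `x - W + W ⊆ U`.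
  have hcont : ContinuousAt (fun p : G × G => x - p.1 + p.2) (0, 0) := by fun_prop
  have hU' : (fun p : G × G => x - p.1 + p.2) ⁻¹' U ∈ nhds ((0 : G), (0 : G)) :=
    hcont.preimage_mem_nhds (by simpa using hUopen.mem_nhds hxU)
  rw [mem_nhds_prod_iff] at hU'
  obtain ⟨W₁, hW₁, W₂, hW₂, hWU⟩ := hU'
  set W := W₁ ∩ W₂ with hWdef
  have hWnhds : W ∈ nhds (0 : G) := Filter.inter_mem hW₁ hW₂
  have hkey : ∀ a ∈ W, ∀ b ∈ W, x - a + b ∈ U := fun a ha b hb =>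
    hWU (Set.mk_mem_prod ha.1 hb.2)
  -- Step 2: get `n₀` with `n₀ • G ⊆ W`.
  obtain ⟨n₀, hn₀, hn₀W⟩ := hG W hWnhds
  have hn₀pos : (0 : ℤ) < (n₀ : ℤ) := by exact_mod_cast hn₀
  refine ⟨n₀, hn₀, ?_⟩
  -- Step 3: write `H ⊆ n₀ • H + F` for a finite `F ⊆ H`.
  obtain ⟨S, hS⟩ := hH
  let F : Set G := (fun c : S → Fin n₀ => ∑ i ∈ S.attach, ((c i : ℕ) : ℤ) • (i : G)) '' Set.univ
  have hSH : ∀ i : G, i ∈ S → i ∈ H := fun i hi => hS ▸ AddSubgroup.subset_closure hi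
  have hFfin : F.Finite := Set.finite_univ.image _
  have hFH : F ⊆ (H : Set G) := by
    rintro _ ⟨c, -, rfl⟩
    exact AddSubgroup.sum_mem _ fun i _ => AddSubgroup.zsmul_mem _ (hSH i i.2) _
  have hdecomp : ∀ h ∈ H, ∃ h' ∈ H, ∃ p ∈ F, h = n₀ • h' + p := by
    intro h hh
    have hspan : h ∈ Submodule.span ℤ (S : Set G) := by
      rw [← hS, ← Submodule.span_int_eq_addSubgroupClosure] at hh
      exact hh
    obtain ⟨f, -, hf⟩ := Submodule.mem_span_finset.1 hspan
    refine ⟨∑ i ∈ S, (f i / (n₀ : ℤ)) • i, AddSubgroup.sum_mem _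
      (fun i hi => AddSubgroup.zsmul_mem _ (hSH i hi) _), ?_⟩
    have hmodlt : ∀ i : G, (f i % (n₀ : ℤ)).toNat < n₀ := by
      intro i
      have h1 : f i % (n₀ : ℤ) < (n₀ : ℤ) := Int.emod_lt_of_pos _ hn₀pos
      omega
    refine ⟨∑ i ∈ S.attach, (((⟨(f ↑i % (n₀ : ℤ)).toNat, hmodlt ↑i⟩ : Fin n₀) : ℕ) : ℤ) • (i : G),
      ⟨fun i => ⟨(f ↑i % (n₀ : ℤ)).toNat, hmodlt ↑i⟩, Set.mem_univ _, rfl⟩, ?_⟩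
    have hp : ∑ i ∈ S.attach, (((⟨(f ↑i % (n₀ : ℤ)).toNat, hmodlt ↑i⟩ : Fin n₀) : ℕ) : ℤ) • (i : G)
        = ∑ i ∈ S, ((f i % (n₀ : ℤ)).toNat : ℤ) • i :=
      Finset.sum_attach S fun i => ((f i % (n₀ : ℤ)).toNat : ℤ) • i
    rw [← hf, Finset.smul_sum, hp, ← Finset.sum_add_distrib]
    refine Finset.sum_congr rfl fun i _ => ?_
    rw [Int.toNat_of_nonneg (Int.emod_nonneg _ (by omega)),
      ← natCast_zsmul, smul_smul, ← add_smul, Int.mul_ediv_add_emod]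
  -- Step 4: compactness: `closure H ⊆ ⋃_{p ∈ F} (n₀ • closure H + p)`.
  set C := closure (H : Set G) with hC
  let T : Set G := ⋃ p ∈ F, (fun y => n₀ • y + p) '' C
  have hTcomp : IsCompact T :=
    hFfin.isCompact_biUnion fun p _ => (isClosed_closure.isCompact).image (by fun_prop)
  have hHT : (H : Set G) ⊆ T := by
    intro h hh
    obtain ⟨h', hh', p, hp, rfl⟩ := hdecomp h hh
    exact Set.mem_biUnion hp ⟨h', subset_closure hh', rfl⟩
  have hCT : C ⊆ T := closure_minimal hHT hTcomp.isClosed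
  obtain ⟨p, hpF, y₀, hy₀, hxy⟩ : ∃ p ∈ F, ∃ y₀ ∈ C, n₀ • y₀ + p = x := by
    have := hCT hx
    simpa [T, Set.mem_iUnion] using this
  -- Step 5: adjust `p` by an element of `n₀ • H` to land near `x`.
  have hximg : x - p ∈ closure ((fun g => n₀ • g) '' (H : Set G)) := by
    have h1 : x - p ∈ (fun g => n₀ • g) '' C := ⟨y₀, hy₀, by rw [← hxy]; abel⟩
    exact image_closure_subset_closure_image (by fun_prop) h1
  have hVnhds : (fun v => (x - p) - v) ⁻¹' W ∈ nhds (x - p) := by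
    refine ContinuousAt.preimage_mem_nhds (by fun_prop) ?_
    simpa using hWnhds
  obtain ⟨v, hvW, h, hhH, hv⟩ := mem_closure_iff_nhds.1 hximg _ hVnhds
  -- `v = n₀ • h`, `(x - p) - n₀ • h ∈ W`
  subst hv
  refine ⟨p + n₀ • h, AddSubgroup.add_mem _ (hFH hpF) (AddSubgroup.nsmul_mem _ hhH _),
    y₀ - h, ?_, ?_, ?_⟩
  · exact AddSubgroup.sub_mem H.topologicalClosure hy₀ (subset_closure hhH)
  · rw [smul_sub, ← hxy]; abel
  · rintro g ⟨z, rfl⟩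
    have hb : n₀ • z ∈ W := hn₀W ⟨z, rfl⟩
    have := hkey _ hvW _ hb
    have heq : x - (x - p - n₀ • h) + n₀ • z = p + n₀ • h + n₀ • z := by abel
    rwa [heq] at this
end

section
/- Let H be a finitely generated abelian group, n₀ ≥ 1 an integer, and (Q_m)_{m ≥ 1} a sequence in H such that Q_m ∈ n₀•H for all m ≥ 1 and Q_{ℓm} − Q_m ∈ (m·n₀)•H for all ℓ, m ≥ 1. Then there exists a sequence (R_m)_{m ≥ 1} in H such that n₀•R_m = Q_m for all m ≥ 1 and R_{ℓm} − R_m ∈ m•H for all ℓ, m ≥ 1. -/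
/-- Compatible choice of `n₀`-th roots in a finitely generated abelian group. -/
theorem stmt_9 (H : Type*) [AddCommGroup H] (hH : AddGroup.FG H)
    (n₀ : ℕ) (hn₀ : 1 ≤ n₀) (Q : ℕ → H)
    (hQ1 : ∀ m : ℕ, 1 ≤ m → ∃ h : H, Q m = n₀ • h)
    (hQ2 : ∀ ℓ m : ℕ, 1 ≤ ℓ → 1 ≤ m → ∃ h : H, Q (ℓ * m) - Q m = (m * n₀) • h) :
    ∃ R : ℕ → H, (∀ m : ℕ, 1 ≤ m → n₀ • R m = Q m) ∧
      (∀ ℓ m : ℕ, 1 ≤ ℓ → 1 ≤ m → ∃ h : H, R (ℓ * m) - R m = m • h) := by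
  classical
  -- total version of hQ2 so we can `choose`
  have hQ2' : ∀ ℓ m : ℕ, ∃ h : H, 1 ≤ ℓ → 1 ≤ m → Q (ℓ * m) - Q m = (m * n₀) • h := by
    intro ℓ m
    by_cases h1 : 1 ≤ ℓ
    · by_cases h2 : 1 ≤ m
      · obtain ⟨h, hh⟩ := hQ2 ℓ m h1 h2
        exact ⟨h, fun _ _ => hh⟩
      · exact ⟨0, fun _ h2' => absurd h2' h2⟩
    · exact ⟨0, fun h1' _ => absurd h1' h1⟩
  choose g hg using hQ2'
  obtain ⟨s1, hs1⟩ := hQ1 1 le_rfl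
  -- S k is a root of Q (k!), built so that S (k+1) - S k ∈ k! • H
  set S : ℕ → H := fun k =>
    Nat.rec s1 (fun k Sk => Sk + (Nat.factorial k) • g (k + 1) (Nat.factorial k)) k with hS
  have hSsucc : ∀ k, S (k + 1) = S k + (Nat.factorial k) • g (k + 1) (Nat.factorial k) :=
    fun k => rfl
  have hSroot : ∀ k, n₀ • S k = Q (Nat.factorial k) := by
    intro k
    induction k with
    | zero => simpa [hS, Nat.factorial] using hs1.symm
    | succ k ih =>
      have hk1 : 1 ≤ k + 1 := Nat.le_add_left 1 k
      have hkf : 1 ≤ Nat.factorial k := Nat.one_le_iff_ne_zero.mpr (Nat.factorial_ne_zero k)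
      have hgk := hg (k + 1) (Nat.factorial k) hk1 hkf
      rw [hSsucc, smul_add, ih, smul_smul, Nat.mul_comm n₀ (Nat.factorial k), ← hgk,
        Nat.factorial_succ]
      abel
  -- telescoping: for m ≤ b, S b - S m ∈ m • H
  have key : ∀ m, 1 ≤ m → ∀ b, m ≤ b → ∃ h : H, S b - S m = m • h := by
    intro m hm b hb
    induction b with
    | zero => exact absurd hb (by omega)
    | succ b ih =>
      rcases eq_or_lt_of_le hb with heq | hlt
      · exact ⟨0, by rw [← heq]; simp⟩
      · have hb' : m ≤ b := by omega
        obtain ⟨h, hh⟩ := ih hb'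
        obtain ⟨c, hc⟩ := Nat.dvd_factorial hm hb'
        refine ⟨h + c • g (b + 1) (Nat.factorial b), ?_⟩
        rw [hSsucc,
          show S b + (Nat.factorial b) • g (b + 1) (Nat.factorial b) - S m
            = (S b - S m) + (Nat.factorial b) • g (b + 1) (Nat.factorial b) by abel,
          hh, hc, mul_smul, ← smul_add]
  -- final roots
  refine ⟨fun m => S m - m • g (Nat.factorial (m - 1)) m, ?_, ?_⟩
  · intro m hm
    have hmf : 1 ≤ Nat.factorial (m - 1) :=
      Nat.one_le_iff_ne_zero.mpr (Nat.factorial_ne_zero (m - 1))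
    have hgm := hg (Nat.factorial (m - 1)) m hmf hm
    have hfac : Nat.factorial (m - 1) * m = Nat.factorial m := by
      rw [Nat.mul_comm]; exact Nat.mul_factorial_pred (Nat.one_le_iff_ne_zero.mp hm)
    rw [smul_sub, hSroot, smul_smul, Nat.mul_comm n₀ m, ← hgm, hfac]
    abel
  · intro ℓ m hℓ hm
    have hle : m ≤ ℓ * m := Nat.le_mul_of_pos_left m hℓ
    obtain ⟨h, hh⟩ := key m hm (ℓ * m) hle
    refine ⟨h - ℓ • g (Nat.factorial (ℓ * m - 1)) (ℓ * m) + g (Nat.factorial (m - 1)) m, ?_⟩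
    have : (ℓ * m) • g (Nat.factorial (ℓ * m - 1)) (ℓ * m)
        = m • (ℓ • g (Nat.factorial (ℓ * m - 1)) (ℓ * m)) := by
      rw [Nat.mul_comm, mul_smul]
    calc S (ℓ * m) - (ℓ * m) • g (Nat.factorial (ℓ * m - 1)) (ℓ * m)
          - (S m - m • g (Nat.factorial (m - 1)) m)
        = (S (ℓ * m) - S m) - (ℓ * m) • g (Nat.factorial (ℓ * m - 1)) (ℓ * m)
          + m • g (Nat.factorial (m - 1)) m := by abel
      _ = m • h - m • (ℓ • g (Nat.factorial (ℓ * m - 1)) (ℓ * m))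
          + m • g (Nat.factorial (m - 1)) m := by rw [hh, this]
      _ = m • (h - ℓ • g (Nat.factorial (ℓ * m - 1)) (ℓ * m)
          + g (Nat.factorial (m - 1)) m) := by
          rw [smul_add, smul_sub]
end

section
/- Let G be a compact Hausdorff topological abelian group such that every neighborhood of 0 in G contains n•G for some integer n ≥ 1, let H be a finitely generated subgroup, and let C be the topological closure of H in G. Then for every integer n ≥ 1 the subgroup n•C is an open subgroup of finite index in C. -/
/-- If every neighborhood of `0` in the compact Hausdorff abelian group `G` contains
`n•G` for some `n ≥ 1`, `H` is a finitely generated subgroup with closure `C`, then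
for every `n ≥ 1` the subgroup `n•C` is open and of finite index in `C`. -/
theorem stmt_11 (G : Type*) [AddCommGroup G] [TopologicalSpace G] [IsTopologicalAddGroup G]
    [CompactSpace G] [T2Space G]
    (hG : ∀ U ∈ nhds (0 : G), ∃ n : ℕ, 1 ≤ n ∧ {g : G | ∃ x : G, n • x = g} ⊆ U)
    (H : AddSubgroup G) (hH : H.FG) (n : ℕ) (hn : 1 ≤ n) :
    IsOpen ((AddMonoidHom.mk' (fun x : H.topologicalClosure => n • x)
        (fun a b => smul_add n a b)).range : Set H.topologicalClosure) ∧
      ((AddMonoidHom.mk' (fun x : H.topologicalClosure => n • x)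
        (fun a b => smul_add n a b)).range).FiniteIndex := by
  classical
  set C := H.topologicalClosure with hCdef
  set φ : C →+ C := AddMonoidHom.mk' (fun x : C => n • x) (fun a b => smul_add n a b) with hφ
  set K := φ.range with hK
  -- `C` is a compact space
  have hCcl : IsClosed (C : Set G) := H.isClosed_topologicalClosure
  haveI : CompactSpace C := isCompact_iff_compactSpace.mp (hCcl.isCompact)
  -- `K` is closed in `C`
  have hKclosed : IsClosed (K : Set C) := by
    have : (K : Set C) = (fun x : C => n • x) '' Set.univ := by
      ext y
      simp [hK, AddMonoidHom.mem_range, hφ, Set.image_univ, Set.mem_range, eq_comm]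
    rw [this]
    exact (isCompact_univ.image (continuous_nsmul n)).isClosed
  -- The set `T = n • C` inside `G` is closed
  have hTcl : IsClosed ((fun g : G => n • g) '' (C : Set G)) :=
    (hCcl.isCompact.image (continuous_nsmul n)).isClosed
  set T : Set G := (fun g : G => n • g) '' (C : Set G) with hT
  -- The quotient of `H` by `n•H` is finite
  set ψ : H →+ H := AddMonoidHom.mk' (fun x : H => n • x) (fun a b => smul_add n a b) with hψ
  set N := ψ.range with hN
  haveI : AddGroup.FG H := (AddGroup.fg_iff_addSubgroup_fg H).mpr hH
  haveI hQfin : Finite (H ⧸ N) := by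
    apply AddCommGroup.finite_of_fg_torsion
    intro q
    refine isOfFinAddOrder_iff_nsmul_eq_zero.mpr ⟨n, by omega, ?_⟩
    induction q using QuotientAddGroup.induction_on with
    | H x =>
      rw [← QuotientAddGroup.mk_nsmul]
      rw [QuotientAddGroup.eq_zero_iff]
      exact ⟨x, rfl⟩
  -- Every element of `C` is of the form `h + n • x` with `h ∈ H`, `x ∈ C`
  have hcover : ∀ c : G, c ∈ (C : Set G) → ∃ h ∈ H, ∃ x ∈ (C : Set G), c = h + n • x := by
    set U : Set G := ⋃ q : H ⧸ N, (fun g => ((Quotient.out q : H) : G) + g) '' T with hU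
    have hUcl : IsClosed U := by
      apply isClosed_iUnion_of_finite
      intro q
      exact (Homeomorph.addLeft ((Quotient.out q : H) : G)).isClosedMap _ hTcl
    have hHU : (H : Set G) ⊆ U := by
      intro h hh
      set h' : H := ⟨h, hh⟩ with hh'
      set q : H ⧸ N := QuotientAddGroup.mk h' with hq
      have : h' - Quotient.out q ∈ N := by
        rw [← QuotientAddGroup.eq_iff_sub_mem]
        exact (QuotientAddGroup.out_eq' q).symm
      obtain ⟨y, hy⟩ := this
      refine Set.mem_iUnion.mpr ⟨q, ⟨n • (y : G), ?_, ?_⟩⟩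
      · exact ⟨(y : G), (H.le_topologicalClosure y.2), rfl⟩
      · have : ((h' : G)) - (Quotient.out q : H) = n • (y : G) := by
          have := congrArg (fun z : H => (z : G)) hy
          simpa [hψ] using this.symm
        have : (h : G) = (Quotient.out q : H) + n • (y : G) := by
          rw [← this]; abel
        simpa using this.symm
    have hCU : (C : Set G) ⊆ U := by
      have : (C : Set G) = closure (H : Set G) := rfl
      rw [this]
      exact closure_minimal hHU hUcl
    intro c hc
    obtain ⟨q, t, ⟨x, hx, hxt⟩, hct⟩ := Set.mem_iUnion.mp (hCU hc)
    exact ⟨(Quotient.out q : H), (Quotient.out q).2, x, hx, by rw [← hct, ← hxt]⟩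
  -- The quotient `C ⧸ K` is finite
  haveI hfinquot : Finite (C ⧸ K) := by
    set f : H →+ C ⧸ K :=
      (QuotientAddGroup.mk' K).comp (AddSubgroup.inclusion H.le_topologicalClosure) with hf
    have hker : ∀ x ∈ N, f x = 0 := by
      rintro x ⟨y, rfl⟩
      rw [hf]
      simp only [AddMonoidHom.comp_apply, QuotientAddGroup.mk'_apply,
        QuotientAddGroup.eq_zero_iff]
      refine ⟨AddSubgroup.inclusion H.le_topologicalClosure y, ?_⟩
      apply Subtype.ext
      show (n : ℕ) • ((y : G)) = _
      simp [hψ]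
    have hsurj : Function.Surjective f := by
      intro z
      induction z using QuotientAddGroup.induction_on with
      | H c =>
        obtain ⟨h, hh, x, hx, hcx⟩ := hcover (c : G) c.2
        refine ⟨⟨h, hh⟩, ?_⟩
        rw [hf]
        simp only [AddMonoidHom.comp_apply, QuotientAddGroup.mk'_apply]
        rw [QuotientAddGroup.eq]
        refine ⟨⟨x, hx⟩, ?_⟩
        apply Subtype.ext
        show (n : ℕ) • x = ((-(AddSubgroup.inclusion H.le_topologicalClosure ⟨h, hh⟩) + c : C) : G)
        push_cast [AddSubgroup.coe_inclusion]
        rw [hcx]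
        abel
    exact Finite.of_surjective (QuotientAddGroup.lift N f hker)
      (fun z => by
        obtain ⟨h, hh⟩ := hsurj z
        exact ⟨QuotientAddGroup.mk h, hh⟩)
  haveI : K.FiniteIndex := K.finiteIndex_of_finite_quotient
  exact ⟨K.isOpen_of_isClosed_of_finiteIndex hKclosed, inferInstance⟩
end

section
/- Let G be a compact Hausdorff topological abelian group such that every neighborhood of 0 in G contains n•G for some integer n ≥ 1, and let H be a finitely generated subgroup. Then the topological closure of H in G is totally disconnected; in particular it is a profinite group. -/
/-- A finitely generated abelian subgroup is covered by finitely many cosets of its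
subgroup of `n`-th multiples. -/
private lemma aux_cover_stmt12 {G : Type*} [AddCommGroup G] (H : AddSubgroup G) (hH : H.FG)
    (n : ℕ) (hn : 1 ≤ n) :
    ∃ T : Set G, T.Finite ∧ ∀ h ∈ H, ∃ t ∈ T, ∃ x ∈ H, h = t + n • x := by
  haveI : AddGroup.FG H := (AddGroup.fg_iff_addSubgroup_fg H).mpr hH
  set N : AddSubgroup H := (nsmulAddMonoidHom n : H →+ H).range with hN
  haveI : Finite (H ⧸ N) := by
    apply AddCommGroup.finite_of_fg_torsion
    intro q
    rw [isOfFinAddOrder_iff_nsmul_eq_zero]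
    refine ⟨n, hn, ?_⟩
    induction q using QuotientAddGroup.induction_on with
    | _ z =>
      have : ((n • z : H) : H ⧸ N) = n • (z : H ⧸ N) := by
        exact map_nsmul (QuotientAddGroup.mk' N) n z
      rw [← this, QuotientAddGroup.eq_zero_iff]
      exact ⟨z, rfl⟩
  refine ⟨Set.range (fun q : H ⧸ N => ((Quotient.out q : H) : G)), Set.finite_range _, ?_⟩
  intro h hh
  set h' : H := ⟨h, hh⟩ with hh'
  have hmem : Quotient.out ((h' : H ⧸ N)) - h' ∈ N := by
    rw [← QuotientAddGroup.eq_iff_sub_mem, QuotientAddGroup.out_eq']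
  obtain ⟨x, hx⟩ := hmem
  refine ⟨((Quotient.out ((h' : H ⧸ N)) : H) : G), ⟨_, rfl⟩, ((-x : H) : G), (-x).2, ?_⟩
  have : h' = Quotient.out ((h' : H ⧸ N)) + n • (-x) := by
    have hx' : n • x = Quotient.out ((h' : H ⧸ N)) - h' := hx
    rw [smul_neg, hx']
    abel
  have := congrArg (fun z : H => (z : G)) this
  simpa using this

/-- If every neighborhood of `0` in the compact Hausdorff abelian group `G` contains
`n•G` for some `n ≥ 1`, the closure of a finitely generated subgroup `H` is totally
disconnected. -/
theorem stmt_12 (G : Type*) [AddCommGroup G] [TopologicalSpace G] [IsTopologicalAddGroup G]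
    [CompactSpace G] [T2Space G]
    (hG : ∀ U ∈ nhds (0 : G), ∃ n : ℕ, 1 ≤ n ∧ {g : G | ∃ x : G, n • x = g} ⊆ U)
    (H : AddSubgroup G) (hH : H.FG) :
    IsTotallyDisconnected (closure (H : Set G)) := by
  classical
  intro t hts ht
  intro x hx y hy
  set K : Set G := closure (H : Set G) with hKdef
  have hKclosed : IsClosed K := isClosed_closure
  have hKcompact : IsCompact K := hKclosed.isCompact
  -- K is a subgroup (it is the topological closure of H)
  have hKgrp : (H.topologicalClosure : Set G) = K := rfl
  have hK0 : (0 : G) ∈ K := hKgrp ▸ (H.topologicalClosure).zero_mem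
  have hKsub : ∀ a ∈ K, ∀ b ∈ K, a - b ∈ K := fun a ha b hb =>
    (H.topologicalClosure).sub_mem ha hb
  have hKadd : ∀ a ∈ K, ∀ b ∈ K, a + b ∈ K := fun a ha b hb =>
    (H.topologicalClosure).add_mem ha hb
  -- main claim: x - y belongs to every neighborhood of 0
  have key : ∀ U ∈ nhds (0 : G), x - y ∈ U := by
    intro U hU
    obtain ⟨n, hn1, hnU⟩ := hG U hU
    set nK : Set G := (fun g : G => n • g) '' K with hnKdef
    have hnK_sub : nK ⊆ {g : G | ∃ z : G, n • z = g} := by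
      rintro g ⟨z, _, rfl⟩; exact ⟨z, rfl⟩
    -- suffices to show x - y ∈ nK
    suffices hxy : x - y ∈ nK by exact hnU (hnK_sub hxy)
    -- nK is a compact (hence closed) subset of K, closed under the group operations
    have hcont : Continuous fun g : G => n • g := continuous_id.nsmul n
    have hnKcompact : IsCompact nK := hKcompact.image hcont
    have hnKclosed : IsClosed nK := hnKcompact.isClosed
    have hnK0 : (0 : G) ∈ nK := ⟨0, hK0, smul_zero n⟩
    have hnKK : nK ⊆ K := by
      rintro g ⟨z, hz, rfl⟩
      have hz' : z ∈ H.topologicalClosure := hz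
      have : n • z ∈ H.topologicalClosure := nsmul_mem hz' n
      exact this
    have hnKadd : ∀ a ∈ nK, ∀ b ∈ nK, a + b ∈ nK := by
      rintro a ⟨za, hza, rfl⟩ b ⟨zb, hzb, rfl⟩
      exact ⟨za + zb, hKadd za hza zb hzb, by simp [smul_add]⟩
    have hnKsub' : ∀ a ∈ nK, ∀ b ∈ nK, a - b ∈ nK := by
      rintro a ⟨za, hza, rfl⟩ b ⟨zb, hzb, rfl⟩
      exact ⟨za - zb, hKsub za hza zb hzb, by simp [smul_sub]⟩
    -- finitely many cosets of nK cover K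
    obtain ⟨T, hTfin, hTcov⟩ := aux_cover_stmt12 H hH n hn1
    have hcosets_closed : ∀ c : G, IsClosed ((fun g : G => c + g) '' nK) :=
      fun c => (Homeomorph.addLeft c).isClosedMap _ hnKclosed
    have hKcov : K ⊆ ⋃ c ∈ T, (fun g : G => c + g) '' nK := by
      apply closure_minimal
      · intro h hh
        obtain ⟨c, hc, z, hzH, rfl⟩ := hTcov h hh
        exact Set.mem_biUnion hc ⟨n • z, ⟨z, subset_closure hzH, rfl⟩, rfl⟩
      · exact hTfin.isClosed_biUnion fun c _ => hcosets_closed c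
    -- the "bad" cosets: those with representative not in nK
    set D : Set G := ⋃ c ∈ {c ∈ T | c ∉ nK}, (fun g : G => c + g) '' nK with hDdef
    have hDclosed : IsClosed D :=
      (hTfin.sep _).isClosed_biUnion fun c _ => hcosets_closed c
    have hnKD : ∀ g ∈ nK, g ∉ D := by
      intro g hg hgD
      obtain ⟨c, hc, m, hm, rfl⟩ := by
        simpa only [hDdef, Set.mem_iUnion, exists_prop] using hgD
      exact hc.2 (by simpa using hnKsub' _ hg _ hm)
    have hKD : ∀ g ∈ K, g ∉ D → g ∈ nK := by
      intro g hgK hgD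
      obtain ⟨c, hc, m, hm, rfl⟩ := by
        simpa only [Set.mem_iUnion, exists_prop] using hKcov hgK
      by_cases hcnK : c ∈ nK
      · exact hnKadd c hcnK m hm
      · exact absurd (Set.mem_biUnion (show c ∈ {c ∈ T | c ∉ nK} from ⟨hc, hcnK⟩) (Set.mem_image_of_mem _ hm)) hgD
    -- the translated clopen coset y + nK
    set A : Set G := (fun g : G => y + g) '' nK with hAdef
    have hAclosed : IsClosed A := hcosets_closed y
    set W : Set G := (fun g : G => y + g) '' Dᶜ with hWdef
    have hWopen : IsOpen W := (Homeomorph.addLeft y).isOpenMap _ hDclosed.isOpen_compl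
    -- on K, W cuts out exactly A
    have hWA : ∀ g ∈ K, g ∈ W → g ∈ A := by
      rintro g hgK ⟨u, hu, rfl⟩
      have huK : u ∈ K := by
        have := hKsub _ hgK y (hts hy)
        simpa using this
      exact ⟨u, hKD u huK hu, rfl⟩
    have hAW : ∀ g, g ∈ A → g ∈ W := by
      rintro g ⟨m, hm, rfl⟩
      exact ⟨m, hnKD m hm, rfl⟩
    -- the preconnected set t is contained in A
    have htA : t ⊆ A := by
      by_contra hnot
      obtain ⟨z0, hz0t, hz0A⟩ := Set.not_subset.mp hnot
      have hcover : t ⊆ W ∪ Aᶜ := by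
        intro z hz
        by_cases hzA : z ∈ A
        · exact Or.inl (hAW z hzA)
        · exact Or.inr hzA
      have h1 : (t ∩ W).Nonempty := ⟨y, hy, hAW y ⟨0, hnK0, by simp⟩⟩
      have h2 : (t ∩ Aᶜ).Nonempty := ⟨z0, hz0t, hz0A⟩
      obtain ⟨z, hzt, hzW, hzA⟩ := ht W Aᶜ hWopen hAclosed.isOpen_compl hcover h1 h2
      exact hzA (hWA z (hts hzt) hzW)
    obtain ⟨m, hm, hxm⟩ := htA hx
    have hx' : x = y + m := hxm.symm
    have : x - y = m := by rw [hx']; abel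
    rw [this]; exact hm
  -- conclude x = y from T2
  have h0 : (0 : G) ∈ closure ({x - y} : Set G) := by
    rw [mem_closure_iff_nhds]
    intro U hU
    exact ⟨x - y, key U hU, rfl⟩
  rw [IsClosed.closure_eq isClosed_singleton, Set.mem_singleton_iff] at h0
  exact sub_eq_zero.mp h0.symm
end
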